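/- arXiv:2411.02593 — 6 statements merged into one kernel-verified Lean document; each statement's English description precedes it below -/
import Mathlib

section
/- Let K be a field with a non-Archimedean absolute value, let (a_n) be a sequence in K and (r_n) a strictly decreasing sequence of positive reals such that the closed disks are nested, i.e. r_{n+1} ≤ r_n and |a_{n+1} − a_n| ≤ r_n for all n. Then for every f ∈ K[X] the sequence n ↦ ‖f‖_{a_n,r_n} is nonincreasing, so the limit ‖f‖ := lim_{n→∞} ‖f‖_{a_n,r_n} exists, and the resulting function f ↦ ‖f‖ is a multiplicative seminorm on K[X] extending |·|. -/
open Polynomial Filter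

/-- A non-Archimedean absolute value on a field `K`. -/
def IsNonarchAbs {K : Type*} [Field K] (abv : K → ℝ) : Prop :=
  (∀ x, 0 ≤ abv x) ∧ (∀ x, abv x = 0 ↔ x = 0) ∧
  (∀ x y, abv (x * y) = abv x * abv y) ∧
  (∀ x y, abv (x + y) ≤ max (abv x) (abv y))

/-- The Gauss seminorm `‖f‖_{a,r} = max_i |c_i| r^i` where `f(X+a) = Σ c_i X^i`. -/
noncomputable def gaussSN {K : Type*} [Field K] (abv : K → ℝ) (a : K) (r : ℝ)
    (f : Polynomial K) : ℝ :=
  ⨆ i : ℕ, abv ((f.comp (X + C a)).coeff i) * r ^ i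

/-- A multiplicative seminorm on `K[X]` extending the absolute value `abv`. -/
def IsMultSeminorm {K : Type*} [Field K] (abv : K → ℝ) (N : Polynomial K → ℝ) : Prop :=
  (∀ f, 0 ≤ N f) ∧ (∀ c : K, N (C c) = abv c) ∧
  (∀ f g, N (f + g) ≤ N f + N g) ∧ (∀ f g, N (f * g) = N f * N g)

/-!
Centered at `a`, the Gauss seminorm of radius `r > 0` is the Gauss norm of the Taylor shift
`f(X + a)`, which is multiplicative by Gauss's lemma. Re-centering at `b` with `|b - a| ≤ r` does
not increase it: `f(X + b) = ∑ cᵢ (X + (b - a))ⁱ` and `‖X + (b - a)‖_r ≤ r`, so the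
ultrametric inequality bounds each term by `|cᵢ| rⁱ`; shrinking the radius only decreases it.
Hence the sequence is antitone and nonnegative, and its limit inherits the seminorm identities.
-/

def IsNonarchAbs.toAbsoluteValue {K : Type*} [Field K] {abv : K → ℝ} (habv : IsNonarchAbs abv) :
    AbsoluteValue K ℝ where
  toFun := abv
  map_mul' := habv.2.2.1
  nonneg' := habv.1
  eq_zero' := habv.2.1
  add_le' x y := (habv.2.2.2 x y).trans (max_le_add_of_nonneg (habv.1 x) (habv.1 y))

lemma IsNonarchAbs.isNonarchimedean_toAbsoluteValue {K : Type*} [Field K] {abv : K → ℝ}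
    (habv : IsNonarchAbs abv) : IsNonarchimedean habv.toAbsoluteValue :=
  habv.2.2.2

namespace Polynomial

section Semiring

variable {R F : Type*} [Semiring R] [FunLike F R ℝ] [ZeroHomClass F R ℝ] (v : F) {c : ℝ}

lemma gaussNorm_le_of_forall {M : ℝ} (p : R[X]) (h : ∀ i, v (p.coeff i) * c ^ i ≤ M) :
    p.gaussNorm v c ≤ M := by
  obtain ⟨i, hi⟩ := p.exists_eq_gaussNorm v c
  exact hi ▸ h i

variable [NonnegHomClass F R ℝ]

lemma iSup_coeff_mul_pow_eq_gaussNorm (p : R[X]) (hc : 0 ≤ c) :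
    ⨆ i, v (p.coeff i) * c ^ i = p.gaussNorm v c := by
  have hbdd : BddAbove (Set.range fun i => v (p.coeff i) * c ^ i) :=
    ⟨_, Set.forall_mem_range.2 (p.le_gaussNorm v hc)⟩
  obtain ⟨i, hi⟩ := p.exists_eq_gaussNorm v c
  exact le_antisymm (ciSup_le (p.le_gaussNorm v hc)) (hi ▸ le_ciSup hbdd i)

lemma gaussNorm_mono (p : R[X]) {c' : ℝ} (hc : 0 ≤ c) (hcc' : c ≤ c') :
    p.gaussNorm v c ≤ p.gaussNorm v c' :=
  gaussNorm_le_of_forall v p fun i =>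
    (mul_le_mul_of_nonneg_left (pow_le_pow_left₀ hc hcc' i) (apply_nonneg v _)).trans
      (p.le_gaussNorm v (hc.trans hcc') i)

end Semiring

section AbsoluteValue

variable {R : Type*} [CommSemiring R] [Nontrivial R] {v : AbsoluteValue R ℝ} {c : ℝ}

lemma gaussNorm_pow_le (hna : IsNonarchimedean v) (hc : 0 ≤ c) (p : R[X]) (n : ℕ) :
    (p ^ n).gaussNorm v c ≤ p.gaussNorm v c ^ n := by
  induction n with
  | zero => rw [pow_zero, pow_zero, ← C_1, gaussNorm_C, map_one]
  | succ n ih =>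
    rw [pow_succ, pow_succ]
    exact (gaussNorm_mul_le v hna _ _ hc).trans
      (mul_le_mul_of_nonneg_right ih (p.gaussNorm_nonneg v hc))

lemma gaussNorm_X_add_C_le {b : R} (hb : v b ≤ c) : (X + C b).gaussNorm v c ≤ c := by
  refine gaussNorm_le_of_forall v _ fun i => ?_
  rcases i with _ | _ | i
  · simpa using hb
  · simp
  · simp [coeff_X, (v.nonneg b).trans hb]

lemma gaussNorm_taylor_le (hna : IsNonarchimedean v) {b : R} (hb : v b ≤ c) (p : R[X]) :
    (taylor b p).gaussNorm v c ≤ p.gaussNorm v c := by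
  have hc : 0 ≤ c := (v.nonneg b).trans hb
  rw [taylor_apply, comp_eq_sum_left, sum_def]
  obtain ⟨i, -, hi⟩ := IsNonarchimedean.finset_image_add (gaussNorm_zero v c)
    (fun q => q.gaussNorm_nonneg v hc) (isNonarchimedean_gaussNorm v hna hc)
    (fun i => C (p.coeff i) * (X + C b) ^ i) p.support
  calc _ ≤ (C (p.coeff i) * (X + C b) ^ i).gaussNorm v c := hi
    _ ≤ v (p.coeff i) * (X + C b).gaussNorm v c ^ i := by
      refine (gaussNorm_mul_le v hna _ _ hc).trans ?_
      rw [gaussNorm_C]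
      exact mul_le_mul_of_nonneg_left (gaussNorm_pow_le hna hc _ i) (v.nonneg _)
    _ ≤ v (p.coeff i) * c ^ i := by
      gcongr
      · exact (X + C b).gaussNorm_nonneg v hc
      · exact gaussNorm_X_add_C_le hb
    _ ≤ p.gaussNorm v c := p.le_gaussNorm v hc i

end AbsoluteValue

end Polynomial

section GaussSeminorm

variable {K : Type*} [Field K] {abv : K → ℝ}

lemma IsMultSeminorm.of_tendsto {ι : Type*} {l : Filter ι} [l.NeBot] {N : ι → K[X] → ℝ}
    {M : K[X] → ℝ} (hN : ∀ i, IsMultSeminorm abv (N i))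
    (hlim : ∀ f, Tendsto (fun i => N i f) l (nhds (M f))) : IsMultSeminorm abv M := by
  refine ⟨fun f => ?_, fun c => ?_, fun f g => ?_, fun f g => ?_⟩
  · exact ge_of_tendsto' (hlim f) fun i => (hN i).1 f
  · exact tendsto_nhds_unique (hlim (C c)) (by simp only [(hN _).2.1, tendsto_const_nhds])
  · exact le_of_tendsto_of_tendsto' (hlim (f + g)) ((hlim f).add (hlim g))
      fun i => (hN i).2.2.1 f g
  · exact tendsto_nhds_unique (hlim (f * g)) <| by
      simpa only [(hN _).2.2.2] using (hlim f).mul (hlim g)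

variable (habv : IsNonarchAbs abv)
include habv

lemma gaussSN_eq_gaussNorm_taylor (a : K) {r : ℝ} (hr : 0 ≤ r) (f : K[X]) :
    gaussSN abv a r f = (taylor a f).gaussNorm habv.toAbsoluteValue r := by
  rw [taylor_apply]
  exact iSup_coeff_mul_pow_eq_gaussNorm habv.toAbsoluteValue _ hr

lemma isMultSeminorm_gaussSN (a : K) {r : ℝ} (hr : 0 < r) :
    IsMultSeminorm abv (gaussSN abv a r) := by
  have := gaussNorm_isAbsoluteValue (c := r) habv.isNonarchimedean_toAbsoluteValue hr
  simp only [IsMultSeminorm, gaussSN_eq_gaussNorm_taylor habv a hr.le, taylor_C, gaussNorm_C,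
    map_add, taylor_mul]
  exact ⟨fun _ => IsAbsoluteValue.abv_nonneg _ _, fun _ => rfl,
    fun _ _ => IsAbsoluteValue.abv_add _ _ _, fun _ _ => IsAbsoluteValue.abv_mul _ _ _⟩

lemma gaussSN_le_of_nested {a a' : K} {r r' : ℝ} (hr' : 0 ≤ r') (hr'r : r' ≤ r)
    (ha : abv (a' - a) ≤ r) (f : K[X]) : gaussSN abv a' r' f ≤ gaussSN abv a r f := by
  rw [gaussSN_eq_gaussNorm_taylor habv a' hr', gaussSN_eq_gaussNorm_taylor habv a (hr'.trans hr'r),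
    ← sub_add_cancel a' a, ← taylor_taylor]
  exact (gaussNorm_mono _ _ hr' hr'r).trans
    (gaussNorm_taylor_le habv.isNonarchimedean_toAbsoluteValue ha _)

end GaussSeminorm

theorem stmt1 {K : Type*} [Field K] (abv : K → ℝ) (habv : IsNonarchAbs abv)
    (a : ℕ → K) (r : ℕ → ℝ) (hrpos : ∀ n, 0 < r n)
    (hrdec : ∀ n, r (n + 1) < r n)
    (hnest : ∀ n, abv (a (n + 1) - a n) ≤ r n) :
    (∀ f : Polynomial K, Antitone fun n => gaussSN abv (a n) (r n) f) ∧
    (∀ f : Polynomial K,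
      Tendsto (fun n => gaussSN abv (a n) (r n) f) atTop
        (nhds (⨅ n, gaussSN abv (a n) (r n) f))) ∧
    IsMultSeminorm abv (fun f => ⨅ n, gaussSN abv (a n) (r n) f) := by
  have hsn n := isMultSeminorm_gaussSN habv (a n) (hrpos n)
  have hanti (f : K[X]) : Antitone fun n => gaussSN abv (a n) (r n) f :=
    antitone_nat_of_succ_le fun n =>
      gaussSN_le_of_nested habv (hrpos _).le (hrdec n).le (hnest n) f
  have htend (f : K[X]) : Tendsto (fun n => gaussSN abv (a n) (r n) f) atTop
      (nhds (⨅ n, gaussSN abv (a n) (r n) f)) :=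
    tendsto_atTop_ciInf (hanti f) ⟨0, Set.forall_mem_range.2 fun n => (hsn n).1 f⟩
  exact ⟨hanti, htend, .of_tendsto hsn htend⟩
end

section
/- Let K be a field with a non-Archimedean absolute value, let a, b ∈ K and r, s > 0. Then ‖f‖_{a,r} ≤ ‖f‖_{b,s} holds for every f ∈ K[X] if and only if r ≤ s and |a − b| ≤ s (i.e. if and only if the closed disk D(a,r) is contained in the closed disk D(b,s)). -/
open Polynomial

theorem stmt2 {K : Type*} [Field K] (abv : K → ℝ) (habv : IsNonarchAbs abv)
    (a b : K) (r s : ℝ) (hr : 0 < r) (hs : 0 < s) :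
    (∀ f : Polynomial K, gaussSN abv a r f ≤ gaussSN abv b s f) ↔
      (r ≤ s ∧ abv (a - b) ≤ s) := by
  obtain ⟨h0, hz, hm, hadd⟩ := habv
  have habv0 : abv 0 = 0 := (hz 0).mpr rfl
  have habv1 : abv 1 = 1 := by
    have h1 : abv 1 ≠ 0 := fun h => one_ne_zero ((hz 1).mp h)
    have h2 : abv 1 * abv 1 = abv 1 * 1 := by rw [mul_one, ← hm, one_mul]
    exact mul_left_cancel₀ h1 h2
  have habv_pow : ∀ (x : K) (n : ℕ), abv (x ^ n) = abv x ^ n := by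
    intro x n
    induction n with
    | zero => simp [habv1]
    | succ n ih => rw [pow_succ, hm, ih, pow_succ]
  have habv_nat : ∀ n : ℕ, abv (n : K) ≤ 1 := by
    intro n
    induction n with
    | zero => simp [habv0]
    | succ n ih =>
        push_cast
        refine le_trans (hadd _ _) (max_le ih ?_)
        rw [habv1]
  -- boundedness of the defining family
  have hbdd : ∀ (p : K[X]) (ρ : ℝ),
      BddAbove (Set.range fun i : ℕ => abv (p.coeff i) * ρ ^ i) := by
    intro p ρ
    apply Set.Finite.bddAbove
    apply Set.Finite.subset
      (Set.Finite.insert 0 ((Set.finite_Iic p.natDegree).image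
        (fun i : ℕ => abv (p.coeff i) * ρ ^ i)))
    rintro x ⟨i, rfl⟩
    by_cases hi : i ≤ p.natDegree
    · exact Set.mem_insert_of_mem _ ⟨i, hi, rfl⟩
    · have : p.coeff i = 0 := coeff_eq_zero_of_natDegree_lt (lt_of_not_ge hi)
      simp [this, habv0]
  have hterm : ∀ (c : K) (ρ : ℝ) (f : K[X]) (i : ℕ),
      abv ((f.comp (X + C c)).coeff i) * ρ ^ i ≤ gaussSN abv c ρ f :=
    fun c ρ f i => le_ciSup (hbdd (f.comp (X + C c)) ρ) i
  have hnonneg : ∀ (c : K) (ρ : ℝ), 0 ≤ ρ → ∀ f : K[X], 0 ≤ gaussSN abv c ρ f :=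
    fun c ρ hρ f =>
      le_trans (mul_nonneg (h0 _) (pow_nonneg hρ 0)) (hterm c ρ f 0)
  -- non-archimedean bound for finite sums
  have hsum : ∀ (B ρ : ℝ), 0 ≤ B → 0 ≤ ρ → ∀ (t : Finset ℕ) (h : ℕ → K),
      (∀ n ∈ t, abv (h n) * ρ ≤ B) → abv (∑ n ∈ t, h n) * ρ ≤ B := by
    intro B ρ hB hρ t
    induction t using Finset.induction_on with
    | empty => intro h _; simpa [habv0] using hB
    | @insert x t hx ih =>
        intro h hh
        rw [Finset.sum_insert hx]
        calc abv (h x + ∑ n ∈ t, h n) * ρ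
            ≤ max (abv (h x)) (abv (∑ n ∈ t, h n)) * ρ :=
              mul_le_mul_of_nonneg_right (hadd _ _) hρ
          _ = max (abv (h x) * ρ) (abv (∑ n ∈ t, h n) * ρ) :=
              max_mul_of_nonneg _ _ hρ
          _ ≤ B := max_le (hh x (Finset.mem_insert_self _ _))
              (ih h fun n hn => hh n (Finset.mem_insert_of_mem hn))
  constructor
  · intro H
    have hcomp1 : (X - C b).comp (X + C a) = X + C (a - b) := by
      rw [sub_comp, X_comp, C_comp, map_sub]; ring
    have hcomp2 : (X - C b).comp (X + C b) = X := by
      rw [sub_comp, X_comp, C_comp]; ring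
    have hupper : gaussSN abv b s (X - C b) ≤ s := by
      apply ciSup_le
      intro i
      rw [hcomp2]
      rcases i with _ | _ | i
      · simp [habv0, hs.le]
      · simp [habv1]
      · simp [coeff_X, habv0, hs.le]
    have h1 : r ≤ gaussSN abv a r (X - C b) := by
      have h := hterm a r (X - C b) 1
      rw [hcomp1] at h
      simpa [coeff_C, habv1] using h
    have h2 : abv (a - b) ≤ gaussSN abv a r (X - C b) := by
      have h := hterm a r (X - C b) 0
      rw [hcomp1] at h
      simpa [coeff_C] using h
    exact ⟨le_trans h1 (le_trans (H _) hupper),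
      le_trans h2 (le_trans (H _) hupper)⟩
  · rintro ⟨hrs, hab⟩ f
    apply ciSup_le
    intro i
    set g : K[X] := f.comp (X + C b) with hgdef
    have hcomp : f.comp (X + C a) = (taylor (a - b)) g := by
      rw [hgdef, ← taylor_apply, ← taylor_apply, taylor_taylor, sub_add_cancel]
    rw [hcomp, taylor_coeff]
    have hdeg : (hasseDeriv i g).natDegree < g.natDegree + 1 :=
      Nat.lt_succ_of_le ((natDegree_hasseDeriv_le g i).trans (Nat.sub_le _ _))
    rw [eval_eq_sum_range' hdeg]
    apply hsum _ _ (hnonneg b s hs.le f) (pow_nonneg hr.le i)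
    intro n _
    rw [hasseDeriv_coeff]
    have hBCr : (0:ℝ) ≤ abv (g.coeff (n + i)) * abv (a - b) ^ n * r ^ i :=
      mul_nonneg (mul_nonneg (h0 _) (pow_nonneg (h0 _) n)) (pow_nonneg hr.le i)
    calc abv (↑((n + i).choose i) * g.coeff (n + i) * (a - b) ^ n) * r ^ i
        = abv (↑((n + i).choose i)) *
            (abv (g.coeff (n + i)) * abv (a - b) ^ n * r ^ i) := by
          rw [hm, hm, habv_pow]; ring
      _ ≤ abv (g.coeff (n + i)) * abv (a - b) ^ n * r ^ i :=
          mul_le_of_le_one_left hBCr (habv_nat _)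
      _ = abv (g.coeff (n + i)) * (abv (a - b) ^ n * r ^ i) := by ring
      _ ≤ abv (g.coeff (n + i)) * (s ^ n * s ^ i) :=
          mul_le_mul_of_nonneg_left
            (mul_le_mul (pow_le_pow_left₀ (h0 _) hab n)
              (pow_le_pow_left₀ hr.le hrs i) (pow_nonneg hr.le i)
              (pow_nonneg hs.le n)) (h0 _)
      _ = abv (g.coeff (n + i)) * s ^ (n + i) := by rw [pow_add]
      _ ≤ gaussSN abv b s f := hterm b s f (n + i)
end

section
/- (Berkovich classification, existence part.) Let K be an algebraically closed field, complete with respect to a nontrivial non-Archimedean absolute value |·|. Then for every multiplicative seminorm ‖·‖ on K[X] extending |·| there exist a sequence (a_n) in K and a nonincreasing sequence (r_n) of nonnegative reals with |a_{n+1} − a_n| ≤ r_n for all n (nested closed disks), such that for every f ∈ K[X] one has ‖f‖ = lim_{n→∞} ‖f‖_{a_n,r_n} = inf_n ‖f‖_{a_n,r_n}. -/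
open Polynomial Filter

open Topology

/-! Over an algebraically closed field a multiplicative seminorm on `K[X]`, such as `N` or a
Gauss seminorm, is determined by its values on constants and on the linear factors `X - b`.
The power trick `N (f + g) ^ n ≤ (n + 1) * max (N f) (N g) ^ n` makes `N` ultrametric, so that
`N (X - b) ≤ max (N (X - a)) |a - b|` and `|a - b| ≤ max (N (X - a)) (N (X - b))`.
Choose centres `a n` for which `r n = N (X - a n)` decreases to `R = inf_c N (X - c)`; the second
inequality makes the disks nested. Both together give
`N (X - b) ≤ max (r n) |a n - b| = ‖X - b‖_{a n, r n} ≤ max (r n) (N (X - b))`,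
and the right-hand side tends to `max R (N (X - b)) = N (X - b)`. Multiplying over the roots
of `f` gives `N f ≤ ‖f‖_{a n, r n} → N f`.
-/

namespace Real

lemma le_of_forall_pow_le_succ_mul_pow {L M : ℝ} (hM : 0 ≤ M)
    (h : ∀ n : ℕ, L ^ n ≤ (n + 1) * M ^ n) : L ≤ M := by
  by_contra! hML
  have hM₀ : 0 < M := by
    refine hM.lt_of_ne fun hM₀ => ?_
    have h₁ := h 1
    simp only [pow_one, ← hM₀] at h₁
    linarith
  obtain ⟨n, hn⟩ := exists_natCast_add_one_lt_pow_of_one_lt ((one_lt_div hM₀).2 hML)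
  rw [div_pow, lt_div_iff₀ (by positivity)] at hn
  linarith [h n]

end Real

lemma MulRingSeminorm.isNonarchimedean_of_natCast_le_one {R : Type*} [CommRing R]
    (μ : MulRingSeminorm R) (h : ∀ n : ℕ, μ n ≤ 1) : IsNonarchimedean μ := by
  intro x y
  set M := max (μ x) (μ y)
  have hx : μ x ≤ M := le_max_left _ _
  have hy : μ y ≤ M := le_max_right _ _
  refine Real.le_of_forall_pow_le_succ_mul_pow ((apply_nonneg μ x).trans hx) fun n => ?_
  calc μ (x + y) ^ n = μ (∑ k ∈ Finset.range (n + 1), x ^ k * y ^ (n - k) * n.choose k) := by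
        rw [← map_pow, add_pow]
    _ ≤ ∑ k ∈ Finset.range (n + 1), μ (x ^ k * y ^ (n - k) * n.choose k) :=
        Finset.le_sum_of_subadditive μ (map_zero μ).le (map_add_le_add μ) _ _
    _ ≤ ∑ k ∈ Finset.range (n + 1), M ^ n := by
        refine Finset.sum_le_sum fun k hk => ?_
        calc μ (x ^ k * y ^ (n - k) * n.choose k) ≤ M ^ k * M ^ (n - k) * 1 := by
              rw [map_mul, map_mul, map_pow, map_pow]
              gcongr
              exact h _
          _ = M ^ n := by
              rw [mul_one, pow_mul_pow_sub M (Nat.lt_succ_iff.1 (Finset.mem_range.1 hk))]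
    _ = (n + 1) * M ^ n := by simp

namespace IsNonarchAbs

variable {K : Type*} [Field K] {abv : K → ℝ}

def toAbsoluteValue_s3 (h : IsNonarchAbs abv) : AbsoluteValue K ℝ where
  toFun := abv
  map_mul' := h.2.2.1
  nonneg' := h.1
  eq_zero' := h.2.1
  add_le' x y := (h.2.2.2 x y).trans (max_le_add_of_nonneg (h.1 x) (h.1 y))

lemma isNonarchimedean (h : IsNonarchAbs abv) : IsNonarchimedean h.toAbsoluteValue_s3 := h.2.2.2

end IsNonarchAbs

namespace IsMultSeminorm

variable {K : Type*} [Field K] {v : AbsoluteValue K ℝ} {N : K[X] → ℝ}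

def toMulRingSeminorm (hN : IsMultSeminorm v N) : MulRingSeminorm K[X] where
  toFun := N
  map_zero' := by rw [← C_0, hN.2.1, map_zero]
  add_le' := hN.2.2.1
  neg' f := by
    rw [neg_eq_neg_one_mul, ← C_1, ← C_neg, hN.2.2.2, hN.2.1, map_neg_eq_map, map_one, one_mul]
  map_one' := by rw [← C_1, hN.2.1, map_one]
  map_mul' := hN.2.2.2

@[simp]
lemma coe_toMulRingSeminorm (hN : IsMultSeminorm v N) : ⇑hN.toMulRingSeminorm = N := rfl

lemma isNonarchimedean (hN : IsMultSeminorm v N) (hv : IsNonarchimedean v) :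
    IsNonarchimedean hN.toMulRingSeminorm :=
  hN.toMulRingSeminorm.isNonarchimedean_of_natCast_le_one fun n => by
    rw [← map_natCast C, coe_toMulRingSeminorm, hN.2.1]
    exact hv.apply_natCast_le_one

end IsMultSeminorm

lemma Polynomial.gaussNorm_mul_of_nonneg {K : Type*} [Field K] {v : AbsoluteValue K ℝ}
    (hv : IsNonarchimedean v) {r : ℝ} (hr : 0 ≤ r) (p q : K[X]) :
    (p * q).gaussNorm v r = p.gaussNorm v r * q.gaussNorm v r := by
  rcases hr.eq_or_lt with rfl | hr
  · simp [mul_coeff_zero]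
  · exact gaussNorm_mul hv hr p q

lemma Polynomial.gaussNorm_X_add_C {K : Type*} [Field K] {v : AbsoluteValue K ℝ}
    (hv : IsNonarchimedean v) {r : ℝ} (hr : 0 ≤ r) (c : K) :
    (X + C c).gaussNorm v r = max r (v c) := by
  refine le_antisymm ?_ (max_le ?_ ?_)
  · calc (X + C c).gaussNorm v r ≤ max (X.gaussNorm v r) ((C c).gaussNorm v r) :=
          isNonarchimedean_gaussNorm v hv hr _ _
      _ = max r (v c) := by rw [← monomial_one_one_eq_X, gaussNorm_monomial, gaussNorm_C]; simp
  · have h := (X + C c).le_gaussNorm v hr 1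
    simpa using h
  · have h := (X + C c).le_gaussNorm v hr 0
    simpa using h

section GaussSN

variable {K : Type*} [Field K] {v : AbsoluteValue K ℝ} {r : ℝ}

lemma gaussSN_eq_gaussNorm (hr : 0 ≤ r) (a : K) (f : K[X]) :
    gaussSN v a r f = (f.comp (X + C a)).gaussNorm v r := by
  rw [gaussSN, ← gaussNorm_coe_powerSeries _ _ hr, PowerSeries.gaussNorm_eq]
  simp only [coeff_coe]

lemma gaussSN_X_sub_C (hv : IsNonarchimedean v) (hr : 0 ≤ r) (a b : K) :
    gaussSN v a r (X - C b) = max r (v (a - b)) := by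
  rw [gaussSN_eq_gaussNorm hr, sub_comp, X_comp, C_comp, add_sub_assoc, ← C_sub,
    gaussNorm_X_add_C hv hr]

lemma gaussSN_C (hr : 0 ≤ r) (a c : K) : gaussSN v a r (C c) = v c := by
  rw [gaussSN_eq_gaussNorm hr, C_comp, gaussNorm_C]

noncomputable def gaussSNHom (hv : IsNonarchimedean v) (hr : 0 ≤ r) (a : K) : K[X] →* ℝ where
  toFun := gaussSN v a r
  map_one' := by rw [gaussSN_eq_gaussNorm hr, one_comp, ← C_1, gaussNorm_C, map_one]
  map_mul' f g := by simp only [gaussSN_eq_gaussNorm hr, mul_comp, gaussNorm_mul_of_nonneg hv hr]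

@[simp]
lemma gaussSNHom_apply (hv : IsNonarchimedean v) (hr : 0 ≤ r) (a : K) (f : K[X]) :
    gaussSNHom hv hr a f = gaussSN v a r f := rfl

end GaussSN

section Factorization

variable {K M : Type*} [Field K] [IsAlgClosed K] [CommMonoid M]

lemma MonoidHom.map_eq_mul_prod_roots (φ : K[X] →* M) (f : K[X]) :
    φ f = φ (C f.leadingCoeff) * (f.roots.map fun b => φ (X - C b)).prod := by
  conv_lhs => rw [(IsAlgClosed.splits f).eq_prod_roots]
  rw [map_mul, map_multiset_prod, Multiset.map_map]
  rfl

lemma MonoidHom.le_of_forall_X_sub_C_le (φ ψ : K[X] →* ℝ) (hφ : ∀ f, 0 ≤ φ f)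
    (hC : ∀ c, φ (C c) = ψ (C c)) (hX : ∀ b, φ (X - C b) ≤ ψ (X - C b)) (f : K[X]) :
    φ f ≤ ψ f := by
  rw [φ.map_eq_mul_prod_roots, ψ.map_eq_mul_prod_roots, hC]
  gcongr
  · rw [← hC]; exact hφ _
  · exact Multiset.prod_map_le_prod_map₀ _ _ (fun b _ => hφ _) fun b _ => hX b

lemma MonoidHom.tendsto_of_forall_X_sub_C [TopologicalSpace M] [ContinuousMul M] {ι : Type*}
    {l : Filter ι} (φ : ι → K[X] →* M) (ψ : K[X] →* M)
    (hC : ∀ i c, φ i (C c) = ψ (C c))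
    (hX : ∀ b, Tendsto (fun i => φ i (X - C b)) l (𝓝 (ψ (X - C b)))) (f : K[X]) :
    Tendsto (fun i => φ i f) l (𝓝 (ψ f)) := by
  simp only [(φ _).map_eq_mul_prod_roots f, ψ.map_eq_mul_prod_roots f, hC]
  exact tendsto_const_nhds.mul (tendsto_multiset_prod _ fun b _ => hX b)

end Factorization

lemma exists_seq_antitone_tendsto_iInf {α : Type*} [Nonempty α] {f : α → ℝ}
    (hf : BddBelow (Set.range f)) :
    ∃ a : ℕ → α, Antitone (f ∘ a) ∧ Tendsto (f ∘ a) atTop (𝓝 (⨅ x, f x)) := by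
  obtain ⟨u, hanti, htend, hmem⟩ := exists_seq_tendsto_sInf (Set.range_nonempty f) hf
  choose a ha using hmem
  have hu : f ∘ a = u := funext ha
  exact ⟨a, hu ▸ hanti, hu ▸ htend⟩

lemma ciInf_eq_of_tendsto_of_forall_le {u : ℕ → ℝ} {x : ℝ} (hu : Tendsto u atTop (𝓝 x))
    (hle : ∀ n, x ≤ u n) : ⨅ n, u n = x :=
  le_antisymm (ge_of_tendsto' hu fun n => ciInf_le ⟨x, Set.forall_mem_range.2 hle⟩ n)
    (le_ciInf hle)

namespace MulRingSeminorm

variable {K : Type*} [Field K] {v : AbsoluteValue K ℝ} {μ : MulRingSeminorm K[X]}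
  (hμ : IsNonarchimedean μ) (hμC : ∀ c, μ (C c) = v c)
include hμ hμC

lemma apply_X_sub_C_le (a b : K) : μ (X - C b) ≤ max (μ (X - C a)) (v (a - b)) := by
  rw [← hμC, show X - C b = X - C a + C (a - b) by rw [C_sub]; ring]
  exact hμ _ _

lemma abv_sub_le_max (a b : K) : v (a - b) ≤ max (μ (X - C a)) (μ (X - C b)) := by
  rw [← hμC, show C (a - b) = X - C b + -(X - C a) by rw [C_sub]; ring, max_comm,
    ← map_neg_eq_map μ (X - C a)]
  exact hμ _ _

variable (hv : IsNonarchimedean v)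
include hv

lemma tendsto_gaussSN_X_sub_C {a : ℕ → K}
    (ha : Tendsto (fun n => μ (X - C (a n))) atTop (𝓝 (⨅ c, μ (X - C c)))) (b : K) :
    Tendsto (fun n => gaussSN v (a n) (μ (X - C (a n))) (X - C b)) atTop
      (𝓝 (μ (X - C b))) := by
  have hinf : ⨅ c, μ (X - C c) ≤ μ (X - C b) :=
    ciInf_le ⟨0, Set.forall_mem_range.2 fun c => apply_nonneg μ _⟩ b
  have hupper := ha.max (tendsto_const_nhds (x := μ (X - C b)))
  rw [max_eq_right hinf] at hupper
  refine tendsto_of_tendsto_of_tendsto_of_le_of_le tendsto_const_nhds hupper (fun n => ?_)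
    (fun n => ?_) <;> rw [gaussSN_X_sub_C hv (apply_nonneg μ _)]
  · exact apply_X_sub_C_le hμ hμC (a n) b
  · exact max_le (le_max_left _ _) (abv_sub_le_max hμ hμC (a n) b)

variable [IsAlgClosed K]

lemma apply_le_gaussSN (a : K) (f : K[X]) : μ f ≤ gaussSN v a (μ (X - C a)) f := by
  have hr := apply_nonneg μ (X - C a)
  refine MonoidHom.le_of_forall_X_sub_C_le (μ : K[X] →* ℝ) (gaussSNHom hv hr a)
    (apply_nonneg μ) (fun c => ?_) (fun b => ?_) f
  · exact (hμC c).trans (gaussSN_C hr a c).symm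
  · exact (apply_X_sub_C_le hμ hμC a b).trans_eq (gaussSN_X_sub_C hv hr a b).symm

lemma tendsto_gaussSN {a : ℕ → K}
    (ha : Tendsto (fun n => μ (X - C (a n))) atTop (𝓝 (⨅ c, μ (X - C c)))) (f : K[X]) :
    Tendsto (fun n => gaussSN v (a n) (μ (X - C (a n))) f) atTop (𝓝 (μ f)) :=
  MonoidHom.tendsto_of_forall_X_sub_C (fun n => gaussSNHom hv (apply_nonneg μ _) (a n))
    (μ : K[X] →* ℝ) (fun n c => (gaussSN_C (apply_nonneg μ _) (a n) c).trans (hμC c).symm)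
    (tendsto_gaussSN_X_sub_C hμ hμC hv ha) f

end MulRingSeminorm

theorem stmt3_general {K : Type*} [Field K] [IsAlgClosed K] (abv : K → ℝ)
    (habv : IsNonarchAbs abv) :
    ∀ N : Polynomial K → ℝ, IsMultSeminorm abv N →
      ∃ (a : ℕ → K) (r : ℕ → ℝ),
        (∀ n, 0 ≤ r n) ∧ (∀ n, r (n + 1) ≤ r n) ∧
        (∀ n, abv (a (n + 1) - a n) ≤ r n) ∧
        ∀ f : Polynomial K,
          N f = (⨅ n, gaussSN abv (a n) (r n) f) ∧
          Tendsto (fun n => gaussSN abv (a n) (r n) f) atTop (nhds (N f)) := by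
  intro N hN
  let v := habv.toAbsoluteValue_s3
  let μ := IsMultSeminorm.toMulRingSeminorm (v := v) hN
  have hv : IsNonarchimedean v := habv.isNonarchimedean
  have hμ : IsNonarchimedean μ := IsMultSeminorm.isNonarchimedean (v := v) hN hv
  have hμC : ∀ c, μ (C c) = v c := hN.2.1
  obtain ⟨a, hanti, htend⟩ := exists_seq_antitone_tendsto_iInf (f := fun c => μ (X - C c))
    ⟨0, Set.forall_mem_range.2 fun c => apply_nonneg μ _⟩
  refine ⟨a, fun n => μ (X - C (a n)), fun n => apply_nonneg μ _, fun n => hanti n.le_succ,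
    fun n => (μ.abv_sub_le_max hμ hμC _ _).trans (max_le (hanti n.le_succ) le_rfl),
    fun f => ?_⟩
  have hlim := μ.tendsto_gaussSN hμ hμC hv htend f
  have hle n := μ.apply_le_gaussSN hμ hμC hv (a n) f
  exact ⟨(ciInf_eq_of_tendsto_of_forall_le hlim hle).symm, hlim⟩

/-- Berkovich classification, existence part. -/
theorem stmt3 {K : Type*} [Field K] [IsAlgClosed K] (abv : K → ℝ)
    (habv : IsNonarchAbs abv)
    (hnontriv : ∃ x : K, abv x ≠ 0 ∧ abv x ≠ 1)
    (hcomplete : ∀ s : ℕ → K,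
      (∀ ε : ℝ, 0 < ε → ∃ N, ∀ m ≥ N, ∀ n ≥ N, abv (s m - s n) < ε) →
      ∃ x : K, ∀ ε : ℝ, 0 < ε → ∃ N, ∀ n ≥ N, abv (s n - x) < ε) :
    ∀ N : Polynomial K → ℝ, IsMultSeminorm abv N →
      ∃ (a : ℕ → K) (r : ℕ → ℝ),
        (∀ n, 0 ≤ r n) ∧ (∀ n, r (n + 1) ≤ r n) ∧
        (∀ n, abv (a (n + 1) - a n) ≤ r n) ∧
        ∀ f : Polynomial K,
          N f = (⨅ n, gaussSN abv (a n) (r n) f) ∧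
          Tendsto (fun n => gaussSN abv (a n) (r n) f) atTop (nhds (N f)) :=
  stmt3_general abv habv
end

section
/- Let n be a positive integer and (a_i, b_i)_{i=1}^n pairs with 0 < a_i < b_i ≤ 1 and the a_i pairwise distinct. Then the comb inverse limit X = { x : ℕ → [0,1] | for every k, either x_k = x_{k+1}, or there exists i ≤ n with x_{k+1} ∈ [a_i, b_i] and x_k = a_i }, with the subspace topology from [0,1]^ℕ, is a dendrite: it is nonempty, compact, connected, locally connected, metrizable, and contains no subspace homeomorphic to the circle S¹. -/
/-!
A point of the comb is a nondecreasing sequence in `[0, 1]` that can only move away from a value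
`a i`. Since there are finitely many `a i`, a point that is `ε`-close to `x` on `[0, m]`, for `ε`
small, copies the jumps of `x` there; it then differs from `x` only by a constant tail, and
segments of such tails connect every small cylinder around `x`: the comb is locally connected.
It is connected because truncations of a point, which are connected to a constant sequence by
finitely many segments, converge to it. Two distinct points are separated by a third one that
follows them up to their first difference and then stays at a value between them avoiding all
`a i`; a circle has no cut points, so the comb contains none.
-/

/-- The comb inverse limit associated to the family of pairs `(a i, b i)`, `i ∈ I`. -/
def combSet (I : Set ℕ) (a b : ℕ → ℝ) : Set (ℕ → ℝ) :=
  {x | (∀ k, x k ∈ Set.Icc (0 : ℝ) 1) ∧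
    ∀ k, x k = x (k + 1) ∨ ∃ i ∈ I, x (k + 1) ∈ Set.Icc (a i) (b i) ∧ x k = a i}

open Set Filter Topology

def Separates {Y : Type*} [TopologicalSpace Y] (z x y : Y) : Prop :=
  z ≠ x ∧ z ≠ y ∧ ∀ S : Set Y, IsPreconnected S → x ∈ S → y ∈ S → z ∈ S

theorem Separates.symm {Y : Type*} [TopologicalSpace Y] {z x y : Y} (h : Separates z x y) :
    Separates z y x :=
  ⟨h.2.1, h.1, fun S hS hy hx => h.2.2 S hS hx hy⟩

theorem isPreconnected_compl_sphere_of_subsingleton {t : Set (Metric.sphere (0 : ℂ) 1)}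
    (ht : t.Subsingleton) : IsPreconnected tᶜ := by
  rcases ht.eq_empty_or_singleton with rfl | ⟨p, rfl⟩
  · have hsphere : IsPreconnected (Metric.sphere (0 : ℂ) 1) :=
      (isConnected_sphere (by simp [Complex.rank_real_complex]) 0 zero_le_one).isPreconnected
    rwa [compl_empty, ← Topology.IsInducing.subtypeVal.isPreconnected_image, image_univ,
      Subtype.range_coe]
  · have hsource := (stereographic (norm_eq_of_mem_sphere p)).symm_image_target_eq_source
    rw [stereographic_source, stereographic_target] at hsource
    rw [← hsource]
    exact isPreconnected_univ.image _ (stereographic_target (norm_eq_of_mem_sphere p) ▸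
      (stereographic (norm_eq_of_mem_sphere p)).continuousOn_symm)

/-- A circle minus one point is still connected, so it has no cut points. -/
theorem not_nonempty_homeomorph_sphere_of_cutPoint {Y : Type*} [TopologicalSpace Y]
    (hcut : ∀ x y : Y, x ≠ y → ∃ z, Separates z x y)
    (s : Set Y) : ¬ Nonempty (s ≃ₜ Metric.sphere (0 : ℂ) 1) := by
  rintro ⟨e⟩
  set f : Metric.sphere (0 : ℂ) 1 → Y := fun q => e.symm q
  have hf : Continuous f := continuous_subtype_val.comp e.symm.continuous
  have hfinj : Function.Injective f := Subtype.val_injective.comp e.symm.injective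
  set p₁ : Metric.sphere (0 : ℂ) 1 := ⟨1, by simp⟩
  set p₂ : Metric.sphere (0 : ℂ) 1 := ⟨-1, by simp⟩
  have hp : f p₁ ≠ f p₂ := hfinj.ne fun h => by norm_num [p₁, p₂] at h
  obtain ⟨z, hz₁, hz₂, hz⟩ := hcut _ _ hp
  have hpunctured : IsPreconnected (f '' (f ⁻¹' {z})ᶜ) :=
    (isPreconnected_compl_sphere_of_subsingleton (subsingleton_singleton.preimage hfinj)).image
      f hf.continuousOn
  obtain ⟨q, hq, hqz⟩ := hz _ hpunctured ⟨p₁, hz₁.symm, rfl⟩ ⟨p₂, hz₂.symm, rfl⟩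
  exact hq hqz

namespace Comb

variable {I : Set ℕ} {a b : ℕ → ℝ}

/-- `x ∈ combSet I a b` unfolds to
`(∀ k, x k ∈ Icc 0 1) ∧ ∀ k, CombStep I a b (x k) (x (k + 1))`. -/
def CombStep (I : Set ℕ) (a b : ℕ → ℝ) (w s : ℝ) : Prop :=
  w = s ∨ ∃ i ∈ I, s ∈ Icc (a i) (b i) ∧ w = a i

namespace CombStep

theorem refl (w : ℝ) : CombStep I a b w w := Or.inl rfl

theorem le {w s : ℝ} (h : CombStep I a b w s) : w ≤ s := by
  rcases h with rfl | ⟨i, -, hs, rfl⟩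
  exacts [le_rfl, hs.1]

theorem mem_image_of_ne {w s : ℝ} (h : CombStep I a b w s) (hne : w ≠ s) : w ∈ a '' I := by
  rcases h with h | ⟨i, hi, -, rfl⟩
  exacts [(hne h).elim, mem_image_of_mem a hi]

theorem of_mem_Icc {w s t : ℝ} (h : CombStep I a b w s) (ht : t ∈ Icc w s) :
    CombStep I a b w t := by
  rcases h with rfl | ⟨i, hi, hs, rfl⟩
  · exact Or.inl (le_antisymm ht.1 ht.2)
  · exact Or.inr ⟨i, hi, ⟨ht.1, ht.2.trans hs.2⟩, rfl⟩

theorem of_mem_uIcc {w s₁ s₂ s : ℝ} (h₁ : CombStep I a b w s₁) (h₂ : CombStep I a b w s₂)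
    (hs : s ∈ uIcc s₁ s₂) : CombStep I a b w s := by
  rcases le_total s₁ s₂ with h | h
  · rw [uIcc_of_le h] at hs
    exact h₂.of_mem_Icc ⟨h₁.le.trans hs.1, hs.2⟩
  · rw [uIcc_of_ge h] at hs
    exact h₁.of_mem_Icc ⟨h₂.le.trans hs.1, hs.2⟩

end CombStep

theorem monotone_of_mem_combSet {x : ℕ → ℝ} (hx : x ∈ combSet I a b) : Monotone x :=
  monotone_nat_of_le_succ fun k => CombStep.le (hx.2 k)

theorem const_mem_combSet {r : ℝ} (hr : r ∈ Icc (0 : ℝ) 1) :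
    (fun _ => r : ℕ → ℝ) ∈ combSet I a b :=
  ⟨fun _ => hr, fun _ => CombStep.refl r⟩

theorem apply_eq_of_notMem_image {x : ℕ → ℝ} (hx : x ∈ combSet I a b) {q : ℕ}
    (hq : x q ∉ a '' I) {k : ℕ} (hk : q ≤ k) : x k = x q := by
  induction k, hk using Nat.le_induction with
  | base => rfl
  | succ k _ ih =>
    by_contra hne
    exact hq (ih ▸ CombStep.mem_image_of_ne (hx.2 k) (fun h => hne (h ▸ ih)))

theorem isClosed_setOf_combStep (hI : I.Finite) :
    IsClosed {p : ℝ × ℝ | CombStep I a b p.1 p.2} := by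
  have : {p : ℝ × ℝ | CombStep I a b p.1 p.2} =
      {p | p.1 = p.2} ∪ ⋃ i ∈ I, (Prod.snd ⁻¹' Icc (a i) (b i)) ∩ {p | p.1 = a i} := by
    ext p
    simp only [CombStep, mem_ofPred_eq, mem_union, mem_iUnion, mem_inter_iff, mem_preimage,
      exists_prop]
  rw [this]
  exact (isClosed_eq continuous_fst continuous_snd).union <| hI.isClosed_biUnion fun i _ =>
    (isClosed_Icc.preimage continuous_snd).inter (isClosed_eq continuous_fst continuous_const)

theorem isCompact_combSet (hI : I.Finite) : IsCompact (combSet I a b) := by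
  have hclosed : IsClosed (combSet I a b) := by
    have : combSet I a b = (⋂ k, (fun x : ℕ → ℝ => x k) ⁻¹' Icc 0 1) ∩
        ⋂ k, (fun x : ℕ → ℝ => (x k, x (k + 1))) ⁻¹' {p | CombStep I a b p.1 p.2} := by
      ext x
      simp only [mem_inter_iff, mem_iInter, mem_preimage, mem_ofPred_eq]
      rfl
    rw [this]
    exact (isClosed_iInter fun k => isClosed_Icc.preimage (continuous_apply k)).inter <|
      isClosed_iInter fun k => (isClosed_setOf_combStep hI).preimage (by fun_prop)
  exact (isCompact_univ_pi fun _ => isCompact_Icc).of_isClosed_subset hclosed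
    fun x hx k _ => hx.1 k

def splice (x : ℕ → ℝ) (q : ℕ) (s : ℝ) : ℕ → ℝ := fun k => if k < q then x k else s

theorem splice_apply_of_lt {x : ℕ → ℝ} {q k : ℕ} (s : ℝ) (hk : k < q) : splice x q s k = x k :=
  if_pos hk

theorem splice_apply_of_le {x : ℕ → ℝ} {q k : ℕ} (s : ℝ) (hk : q ≤ k) : splice x q s k = s :=
  if_neg hk.not_gt

theorem splice_succ_self (x : ℕ → ℝ) (q : ℕ) : splice x (q + 1) (x q) = splice x q (x q) := by
  funext k
  rcases lt_trichotomy k q with hk | rfl | hk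
  · rw [splice_apply_of_lt _ hk, splice_apply_of_lt _ (hk.trans q.lt_succ_self)]
  · rw [splice_apply_of_lt _ k.lt_succ_self, splice_apply_of_le _ le_rfl]
  · rw [splice_apply_of_le _ hk, splice_apply_of_le _ hk.le]

theorem continuous_splice (x : ℕ → ℝ) (q : ℕ) : Continuous (splice x q) :=
  continuous_pi fun k => by
    by_cases hk : k < q <;> simp only [splice, hk, if_true, if_false] <;> fun_prop

theorem tendsto_splice_self (x : ℕ → ℝ) : Tendsto (fun q => splice x q (x q)) atTop (𝓝 x) :=
  tendsto_pi_nhds.2 fun k => tendsto_const_nhds.congr' <|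
    eventually_atTop.2 ⟨k + 1, fun _ hq => (splice_apply_of_lt _ hq).symm⟩

theorem splice_eq_splice_of_le {x : ℕ → ℝ} {q m : ℕ} (hqm : q ≤ m)
    (hx : ∀ k, q ≤ k → k ≤ m → x k = x m) : splice x q (x m) = splice x m (x m) := by
  funext k
  rcases lt_or_ge k q with hkq | hqk
  · rw [splice_apply_of_lt _ hkq, splice_apply_of_lt _ (hkq.trans_le hqm)]
  · rw [splice_apply_of_le _ hqk]
    rcases lt_or_ge k m with hkm | hmk
    · rw [splice_apply_of_lt _ hkm, hx k hqk hkm.le]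
    · rw [splice_apply_of_le _ hmk]

theorem splice_mem_combSet {x : ℕ → ℝ} (hx : x ∈ combSet I a b) {q : ℕ} {s : ℝ}
    (hs : s ∈ Icc (0 : ℝ) 1) (hstep : ∀ p, p + 1 = q → CombStep I a b (x p) s) :
    splice x q s ∈ combSet I a b := by
  refine ⟨fun k => ?_, fun k => ?_⟩
  · by_cases hk : k < q
    · rw [splice_apply_of_lt _ hk]; exact hx.1 k
    · rw [splice_apply_of_le _ (not_lt.1 hk)]; exact hs
  · rcases lt_trichotomy (k + 1) q with hk | hk | hk
    · rw [splice_apply_of_lt _ hk, splice_apply_of_lt _ (k.lt_succ_self.trans hk)]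
      exact hx.2 k
    · rw [splice_apply_of_lt _ (hk ▸ k.lt_succ_self), splice_apply_of_le _ hk.ge]
      exact hstep k hk
    · rw [splice_apply_of_le _ (Nat.le_of_lt_succ hk), splice_apply_of_le _ hk.le]
      exact CombStep.refl s

theorem splice_succ_mem_combSet {y : ℕ → ℝ} (hy : y ∈ combSet I a b) (q : ℕ) {s : ℝ}
    (hs : s ∈ uIcc (y q) (y (q + 1))) : splice y (q + 1) s ∈ combSet I a b := by
  rw [uIcc_of_le (monotone_of_mem_combSet hy q.le_succ)] at hs
  refine splice_mem_combSet hy ⟨(hy.1 q).1.trans hs.1, hs.2.trans (hy.1 _).2⟩ fun p hp => ?_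
  rw [Nat.add_right_cancel hp]
  exact CombStep.of_mem_Icc (hy.2 q) hs

/-- The truncations `splice y q (y q)`, `q ≥ m`, of `y ∈ S` are linked to each other by
segments and converge to `y`. -/
theorem isPreconnected_of_splice_mem {S : Set (ℕ → ℝ)} {m : ℕ} {c : ℕ → ℝ}
    (hsplice : ∀ y ∈ S, ∀ q, m ≤ q → ∀ s ∈ uIcc (y q) (y (q + 1)), splice y (q + 1) s ∈ S)
    (hbase : ∀ y ∈ S, (∀ k, m ≤ k → y k = y m) → y ∈ connectedComponentIn S c) :
    IsPreconnected S := by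
  have htrunc : ∀ y ∈ S, ∀ q, m ≤ q → splice y q (y q) ∈ connectedComponentIn S c := by
    intro y hy q hq
    induction q, hq using Nat.le_induction with
    | base =>
      refine hbase _ ?_ fun k hk => by rw [splice_apply_of_le _ hk, splice_apply_of_le _ le_rfl]
      rw [← splice_succ_self]
      exact hsplice y hy m le_rfl _ left_mem_uIcc
    | succ q hq ih =>
      have hseg : IsPreconnected (splice y (q + 1) '' uIcc (y q) (y (q + 1))) :=
        isPreconnected_uIcc.image _ (continuous_splice y _).continuousOn
      have hstart : splice y q (y q) ∈ splice y (q + 1) '' uIcc (y q) (y (q + 1)) :=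
        ⟨y q, left_mem_uIcc, splice_succ_self y q⟩
      rw [connectedComponentIn_eq ih]
      exact hseg.subset_connectedComponentIn hstart
        (image_subset_iff.2 fun s hs => hsplice y hy q hq s hs) ⟨_, right_mem_uIcc, rfl⟩
  refine (isPreconnected_connectedComponentIn (x := c)).subset_closure
    (connectedComponentIn_subset _ _) fun y hy => mem_closure_of_tendsto (tendsto_splice_self y) ?_
  exact eventually_atTop.2 ⟨m, htrunc y hy⟩

theorem isPreconnected_combSet : IsPreconnected (combSet I a b) := by
  refine isPreconnected_of_splice_mem (m := 0) (c := 0) ?_ fun y hy hconst => ?_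
  · exact fun y hy q _ s hs => splice_succ_mem_combSet hy q hs
  · have hconsts : IsPreconnected ((fun r => (fun _ => r : ℕ → ℝ)) '' Icc 0 (y 0)) :=
      isPreconnected_Icc.image _ (by fun_prop)
    refine hconsts.subset_connectedComponentIn ⟨0, ⟨le_rfl, (hy.1 0).1⟩, rfl⟩ ?_
      ⟨y 0, ⟨(hy.1 0).1, le_rfl⟩, funext fun k => (hconst k k.zero_le).symm⟩
    rintro _ ⟨r, hr, rfl⟩
    exact const_mem_combSet ⟨hr.1, hr.2.trans (hy.1 0).2⟩

def cylinder (x : ℕ → ℝ) (m : ℕ) (ε : ℝ) : Set (ℕ → ℝ) := {y | ∀ k ≤ m, |y k - x k| < ε}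

theorem isOpen_cylinder (x : ℕ → ℝ) (m : ℕ) (ε : ℝ) : IsOpen (cylinder x m ε) := by
  have : cylinder x m ε = (Iic m).pi fun k => Metric.ball (x k) ε := by
    ext y
    simp [cylinder, Real.dist_eq]
  rw [this]
  exact isOpen_set_pi (finite_Iic m) fun _ _ => Metric.isOpen_ball

theorem mem_cylinder_self (x : ℕ → ℝ) (m : ℕ) {ε : ℝ} (hε : 0 < ε) : x ∈ cylinder x m ε :=
  fun k _ => by rwa [sub_self, abs_zero]

theorem exists_eventually_cylinder_subset {x : ℕ → ℝ} {s : Set (ℕ → ℝ)} (hs : s ∈ 𝓝 x) :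
    ∃ m, ∀ᶠ ε in 𝓝[>] (0 : ℝ), cylinder x m ε ⊆ s := by
  rw [nhds_pi, Filter.mem_pi] at hs
  obtain ⟨J, hJ, t, ht, hJs⟩ := hs
  obtain ⟨m, hm⟩ := hJ.bddAbove
  refine ⟨m, ?_⟩
  have hball : ∀ k ∈ J, ∀ᶠ ε in 𝓝[>] (0 : ℝ), Metric.ball (x k) ε ⊆ t k := fun k _ => by
    obtain ⟨r, hr, hrt⟩ := Metric.mem_nhds_iff.1 (ht k)
    filter_upwards [nhdsWithin_le_nhds (eventually_lt_nhds hr)] with ε hε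
    exact (Metric.ball_subset_ball hε.le).trans hrt
  filter_upwards [hJ.eventually_all.2 hball] with ε hε y hy
  refine hJs fun k hk => hε k hk ?_
  rw [Metric.mem_ball, Real.dist_eq]
  exact hy k (hm hk)

/-- `ε` is small enough, relative to the finitely many values `a i` and the jumps of `x` on
`[0, m]`, that the points of the comb in `cylinder x m ε` must copy the jumps of `x`. -/
def IsRigidRadius (I : Set ℕ) (a x : ℕ → ℝ) (m : ℕ) (ε : ℝ) : Prop :=
  (∀ k ≤ m, ∀ r ∈ a '' I, |r - x k| < ε → r = x k) ∧
    ∀ k < m, x k < x (k + 1) → x k + 2 * ε ≤ x (k + 1)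

theorem eventually_isRigidRadius (hI : I.Finite) (x : ℕ → ℝ) (m : ℕ) :
    ∀ᶠ ε in 𝓝[>] (0 : ℝ), IsRigidRadius I a x m ε := by
  have hsmall : ∀ r : ℝ, ∀ᶠ ε in 𝓝[>] (0 : ℝ), 0 < r → ε < r := fun r => by
    by_cases hr : 0 < r
    · filter_upwards [nhdsWithin_le_nhds (eventually_lt_nhds hr)] with ε hε
      exact fun _ => hε
    · exact Eventually.of_forall fun _ h => (hr h).elim
  refine ((finite_Iic m).eventually_all.2 fun k _ =>
    (hI.image a).eventually_all.2 fun r _ => ?_).and ((finite_Iio m).eventually_all.2 fun k _ => ?_)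
  · filter_upwards [hsmall |r - x k|] with ε hε hr
    by_contra hne
    exact (hε (abs_pos.2 (sub_ne_zero.2 hne))).not_gt hr
  · filter_upwards [hsmall ((x (k + 1) - x k) / 2)] with ε hε hlt
    linarith [hε (by linarith)]

namespace IsRigidRadius

variable {x y : ℕ → ℝ} {m : ℕ} {ε : ℝ}

theorem eq_of_mem_image (hε : IsRigidRadius I a x m ε) (hy : y ∈ cylinder x m ε) {k : ℕ}
    (hk : k ≤ m) (hyk : y k ∈ a '' I) : y k = x k :=
  hε.1 k hk _ hyk (hy k hk)

theorem eq_or_eq (hε : IsRigidRadius I a x m ε) (hx : Monotone x) (hy : y ∈ combSet I a b)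
    (hyx : y ∈ cylinder x m ε) {k : ℕ} (hk : k ≤ m) : y k = x k ∨ x k = x m := by
  induction hk using Nat.decreasingInduction with
  | self => exact Or.inr rfl
  | of_succ k hk ih =>
    have hjump : y k < y (k + 1) → y k = x k := fun h =>
      hε.eq_of_mem_image hyx hk.le (CombStep.mem_image_of_ne (hy.2 k) h.ne)
    rcases (hx k.le_succ).lt_or_eq with hlt | heq
    · refine Or.inl (hjump ?_)
      have := hε.2 k hk hlt
      linarith [abs_lt.1 (hyx k hk.le), abs_lt.1 (hyx (k + 1) hk)]
    · rcases (monotone_of_mem_combSet hy k.le_succ).lt_or_eq with hylt | hyeq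
      · exact Or.inl (hjump hylt)
      · rcases ih with h | h
        · exact Or.inl (by rw [hyeq, h, heq])
        · exact Or.inr (heq.trans h)

theorem exists_eq_splice (hε : IsRigidRadius I a x m ε) (hx : Monotone x)
    (hy : y ∈ combSet I a b) (hyx : y ∈ cylinder x m ε) (hconst : ∀ k, m ≤ k → y k = y m) :
    ∃ q ≤ m, y = splice x q (y q) ∧ ∀ k, q ≤ k → k ≤ m → x k = x m := by
  classical
  by_cases hdiff : ∃ k ≤ m, y k ≠ x k
  · obtain ⟨hqm, hq⟩ := Nat.find_spec hdiff
    set q := Nat.find hdiff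
    have hplateau : x q = x m := (hε.eq_or_eq hx hy hyx hqm).resolve_left hq
    have hafter : ∀ k, q ≤ k → y k = y q :=
      fun k hk => apply_eq_of_notMem_image hy (fun h => hq (hε.eq_of_mem_image hyx hqm h)) hk
    refine ⟨q, hqm, funext fun k => ?_, fun k hqk hkm =>
      le_antisymm (hx hkm) (hplateau ▸ hx hqk)⟩
    rcases lt_or_ge k q with hk | hk
    · rw [splice_apply_of_lt _ hk]
      by_contra hne
      exact Nat.find_min hdiff hk ⟨(hk.trans_le hqm).le, hne⟩
    · rw [splice_apply_of_le _ hk, hafter k hk]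
  · push Not at hdiff
    refine ⟨m, le_rfl, funext fun k => ?_, fun k hmk hkm => by rw [le_antisymm hkm hmk]⟩
    rcases lt_or_ge k m with hk | hk
    · rw [splice_apply_of_lt _ hk, hdiff k hk.le]
    · rw [splice_apply_of_le _ hk, hconst k hk]

end IsRigidRadius

theorem isPreconnected_combSet_inter_cylinder {x : ℕ → ℝ} (hx : x ∈ combSet I a b) {m : ℕ}
    {ε : ℝ} (hε : IsRigidRadius I a x m ε) :
    IsPreconnected (combSet I a b ∩ cylinder x m ε) := by
  refine isPreconnected_of_splice_mem (m := m) (c := splice x m (x m))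
    (fun y hy q hq s hs => ⟨splice_succ_mem_combSet hy.1 q hs, fun k hk => ?_⟩) ?_
  · rw [splice_apply_of_lt _ (Nat.lt_succ_of_le (hk.trans hq))]
    exact hy.2 k hk
  rintro y ⟨hy, hyx⟩ hconst
  have hxmono := monotone_of_mem_combSet hx
  obtain ⟨q, hqm, hyq, hplateau⟩ := hε.exists_eq_splice hxmono hy hyx hconst
  have hym : |y q - x m| < ε := by
    have := hyx m le_rfl
    rwa [hyq, splice_apply_of_le _ hqm] at this
  have hseg : splice x q '' uIcc (x m) (y q) ⊆ combSet I a b ∩ cylinder x m ε := by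
    rintro _ ⟨s, hs, rfl⟩
    refine ⟨splice_mem_combSet hx (ordConnected_Icc.uIcc_subset (hx.1 m) (hy.1 q) hs)
      fun p hp => ?_, fun k hk => ?_⟩
    · have hyp : y p = x p := by rw [hyq, splice_apply_of_lt _ (hp ▸ p.lt_succ_self)]
      refine CombStep.of_mem_uIcc ?_ (hyp ▸ hp ▸ hy.2 p) hs
      rw [← hplateau q le_rfl hqm, ← hp]
      exact hx.2 p
    · rcases lt_or_ge k q with hkq | hqk
      · rw [splice_apply_of_lt _ hkq, sub_self, abs_zero]
        exact (abs_nonneg _).trans_lt hym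
      · rw [splice_apply_of_le _ hqk, hplateau k hqk hk]
        exact (abs_sub_left_of_mem_uIcc hs).trans_lt hym
  rw [← splice_eq_splice_of_le hqm hplateau]
  exact (isPreconnected_uIcc.image _ (continuous_splice x q).continuousOn
    ).subset_connectedComponentIn ⟨x m, left_mem_uIcc, rfl⟩ hseg ⟨y q, right_mem_uIcc, hyq.symm⟩

theorem locallyConnectedSpace_combSet (hI : I.Finite) :
    LocallyConnectedSpace (combSet I a b) := by
  refine locallyConnectedSpace_iff_connected_subsets.2 fun x U hU => ?_
  obtain ⟨W, hW, hWU⟩ := (mem_nhds_subtype _ _ _).1 hU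
  obtain ⟨m, hm⟩ := exists_eventually_cylinder_subset hW
  obtain ⟨ε, ⟨hεW, hrigid⟩, hε⟩ :=
    ((hm.and (eventually_isRigidRadius hI x m)).and self_mem_nhdsWithin).exists
  refine ⟨Subtype.val ⁻¹' cylinder x m ε, ((isOpen_cylinder x m ε).preimage
    continuous_subtype_val).mem_nhds (mem_cylinder_self x m hε), ?_, fun y hy => hWU (hεW hy)⟩
  rw [← Topology.IsInducing.subtypeVal.isPreconnected_image, Subtype.image_preimage_coe]
  exact isPreconnected_combSet_inter_cylinder x.2 hrigid

theorem isOpen_setOf_forall_eq_and_lt (hI : I.Finite) {x : ℕ → ℝ} {k₀ : ℕ} {t : ℝ}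
    (hxt : ∀ k < k₀, x k ≤ t) :
    IsOpen {w : combSet I a b | (∀ k < k₀, w.1 k = x k) ∧ t < w.1 k₀} := by
  refine isOpen_iff_mem_nhds.2 fun w hw => (mem_nhds_subtype _ _ _).2 ?_
  obtain ⟨ε, ⟨hrigid, hεt⟩, hε⟩ := ((eventually_isRigidRadius hI w.1 k₀).and
    (nhdsWithin_le_nhds (eventually_lt_nhds (sub_pos.2 hw.2)))).and
    self_mem_nhdsWithin |>.exists
  refine ⟨cylinder w k₀ ε, (isOpen_cylinder _ _ _).mem_nhds (mem_cylinder_self _ _ hε),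
    fun w' hw' => ⟨fun k hk => ?_, ?_⟩⟩
  · have hne : w.1 k ≠ w.1 k₀ := by linarith [hw.1 k hk, hxt k hk, hw.2]
    rw [← hw.1 k hk]
    exact (hrigid.eq_or_eq (monotone_of_mem_combSet w.2) w'.2 hw' hk.le).resolve_right hne
  · linarith [abs_lt.1 (hw' k₀ le_rfl)]

theorem isClosed_setOf_forall_eq_and_le (X : Set (ℕ → ℝ)) (x : ℕ → ℝ) (k₀ : ℕ) (t : ℝ) :
    IsClosed {w : X | (∀ k < k₀, w.1 k = x k) ∧ t ≤ w.1 k₀} := by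
  simp only [ofPred_and, ofPred_forall]
  exact (isClosed_iInter fun k => isClosed_iInter fun _ =>
    isClosed_eq ((continuous_apply k).comp continuous_subtype_val) continuous_const).inter
    (isClosed_le continuous_const ((continuous_apply k₀).comp continuous_subtype_val))

theorem splice_mem_combSet_of_lt {x y : ℕ → ℝ} (hx : x ∈ combSet I a b)
    (hy : y ∈ combSet I a b) {k₀ : ℕ} (hagree : ∀ k < k₀, x k = y k) {t : ℝ}
    (ht : t ∈ Icc (x k₀) (y k₀)) :
    splice x k₀ t ∈ combSet I a b := by
  refine splice_mem_combSet hx ⟨(hx.1 k₀).1.trans ht.1, ht.2.trans (hy.1 k₀).2⟩ fun p hp => ?_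
  have hstep : CombStep I a b (x p) (y k₀) := by
    rw [hagree p (hp ▸ p.lt_succ_self), ← hp]
    exact hy.2 p
  exact CombStep.of_mem_Icc hstep
    ⟨(monotone_of_mem_combSet hx (hp ▸ p.le_succ)).trans ht.1, ht.2⟩

theorem exists_cutPoint_of_lt (hI : I.Finite) {x y : combSet I a b} {k₀ : ℕ}
    (hagree : ∀ k < k₀, x.1 k = y.1 k) (hlt : x.1 k₀ < y.1 k₀) : ∃ z, Separates z x y := by
  obtain ⟨t, ⟨hxt, hty⟩, ht⟩ := ((Ioo_infinite hlt).sdiff (hI.image a)).nonempty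
  have hz : splice x.1 k₀ t ∈ combSet I a b :=
    splice_mem_combSet_of_lt x.2 y.2 hagree ⟨hxt.le, hty.le⟩
  have hzk₀ : splice x.1 k₀ t k₀ = t := splice_apply_of_le _ le_rfl
  set u := {w : combSet I a b | (∀ k < k₀, w.1 k = x.1 k) ∧ t < w.1 k₀}
  set C := {w : combSet I a b | (∀ k < k₀, w.1 k = x.1 k) ∧ t ≤ w.1 k₀}
  have hu : IsOpen u := isOpen_setOf_forall_eq_and_lt hI fun k hk =>
    (monotone_of_mem_combSet x.2 hk.le).trans hxt.le
  have hC : IsClosed C := isClosed_setOf_forall_eq_and_le _ _ _ _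
  -- A point of `C` with `w k₀ = t` is constant from `k₀` on, as `t` is no `a i`: it is `z`.
  have hcover : ∀ w, w ≠ ⟨_, hz⟩ → w ∈ u ∪ Cᶜ := by
    intro w hw
    by_cases hwC : w ∈ C
    · refine Or.inl ⟨hwC.1, hwC.2.lt_of_ne fun hwt => hw (Subtype.ext (funext fun k => ?_))⟩
      show w.1 k = splice x.1 k₀ t k
      rcases lt_or_ge k k₀ with hk | hk
      · rw [hwC.1 k hk, splice_apply_of_lt _ hk]
      · rw [splice_apply_of_le _ hk, apply_eq_of_notMem_image w.2 (hwt ▸ ht) hk, hwt]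
    · exact Or.inr hwC
  refine ⟨⟨_, hz⟩, fun h => hxt.ne' (hzk₀ ▸ congrFun (congrArg Subtype.val h) k₀),
    fun h => hty.ne (hzk₀ ▸ congrFun (congrArg Subtype.val h) k₀), fun S hS hxS hyS => ?_⟩
  by_contra hzS
  have hyu : y ∈ u := ⟨fun k hk => (hagree k hk).symm, hty⟩
  have hxC : x ∈ Cᶜ := fun h => (hxt.trans_le h.2).false
  have hdisj : Disjoint u Cᶜ := disjoint_compl_right_iff_subset.2 fun _ h => ⟨h.1, h.2.le⟩
  rcases hS.subset_or_subset hu hC.isOpen_compl hdisj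
    (fun w hw => hcover w (ne_of_mem_of_not_mem hw hzS)) with h | h
  · exact hxC ⟨(h hxS).1, (h hxS).2.le⟩
  · exact h hyS ⟨hyu.1, hyu.2.le⟩

theorem exists_cutPoint (hI : I.Finite) {x y : combSet I a b} (hxy : x ≠ y) :
    ∃ z, Separates z x y := by
  classical
  have hdiff : ∃ k, x.1 k ≠ y.1 k := Function.ne_iff.1 (Subtype.val_injective.ne hxy)
  have hagree : ∀ k < Nat.find hdiff, x.1 k = y.1 k :=
    fun k hk => not_not.1 (Nat.find_min hdiff hk)
  rcases (Nat.find_spec hdiff).lt_or_gt with hlt | hlt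
  · exact exists_cutPoint_of_lt hI hagree hlt
  · exact (exists_cutPoint_of_lt hI (fun k hk => (hagree k hk).symm) hlt).imp
      fun _ => Separates.symm

end Comb

theorem stmt9_general (n : ℕ) (a b : ℕ → ℝ) :
    Nonempty ↥(combSet {i | 1 ≤ i ∧ i ≤ n} a b) ∧
    CompactSpace ↥(combSet {i | 1 ≤ i ∧ i ≤ n} a b) ∧
    ConnectedSpace ↥(combSet {i | 1 ≤ i ∧ i ≤ n} a b) ∧
    LocallyConnectedSpace ↥(combSet {i | 1 ≤ i ∧ i ≤ n} a b) ∧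
    TopologicalSpace.MetrizableSpace ↥(combSet {i | 1 ≤ i ∧ i ≤ n} a b) ∧
    ∀ s : Set ↥(combSet {i | 1 ≤ i ∧ i ≤ n} a b),
      ¬ Nonempty (↥s ≃ₜ ↥(Metric.sphere (0 : ℂ) 1)) := by
  have hI : {i | 1 ≤ i ∧ i ≤ n}.Finite := finite_Icc 1 n
  have hzero : (0 : ℕ → ℝ) ∈ combSet {i | 1 ≤ i ∧ i ≤ n} a b :=
    Comb.const_mem_combSet ⟨le_rfl, zero_le_one⟩
  exact ⟨⟨⟨0, hzero⟩⟩, isCompact_iff_compactSpace.1 (Comb.isCompact_combSet hI),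
    isConnected_iff_connectedSpace.1 ⟨⟨0, hzero⟩, Comb.isPreconnected_combSet⟩,
    Comb.locallyConnectedSpace_combSet hI, inferInstance,
    not_nonempty_homeomorph_sphere_of_cutPoint fun _ _ => Comb.exists_cutPoint hI⟩

/-- The comb inverse limit of a finite family `(a_i,b_i)_{i=1}^n` is a dendrite:
nonempty, compact, connected, locally connected, metrizable, and containing no
subspace homeomorphic to the circle. -/
theorem stmt9 (n : ℕ) (hn : 0 < n) (a b : ℕ → ℝ)
    (hab : ∀ i, 1 ≤ i → i ≤ n → 0 < a i ∧ a i < b i ∧ b i ≤ 1)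
    (hdist : ∀ i j, 1 ≤ i → i ≤ n → 1 ≤ j → j ≤ n → i ≠ j → a i ≠ a j) :
    Nonempty ↥(combSet {i | 1 ≤ i ∧ i ≤ n} a b) ∧
    CompactSpace ↥(combSet {i | 1 ≤ i ∧ i ≤ n} a b) ∧
    ConnectedSpace ↥(combSet {i | 1 ≤ i ∧ i ≤ n} a b) ∧
    LocallyConnectedSpace ↥(combSet {i | 1 ≤ i ∧ i ≤ n} a b) ∧
    TopologicalSpace.MetrizableSpace ↥(combSet {i | 1 ≤ i ∧ i ≤ n} a b) ∧
    ∀ s : Set ↥(combSet {i | 1 ≤ i ∧ i ≤ n} a b),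
      ¬ Nonempty (↥s ≃ₜ ↥(Metric.sphere (0 : ℂ) 1)) :=
  stmt9_general n a b
end

section
/- Let (a_n, b_n)_{n≥1} be a sequence of pairs with 0 < a_n < b_n ≤ 1, the a_n pairwise distinct, lim_{n→∞}(b_n − a_n) = 0, and {a_n : n ≥ 1} dense in [0,1]. Let X_∞ ⊆ [0,1]^ℕ be the comb inverse limit associated to the full family (a_n,b_n)_{n≥1}, and for each m ≥ 1 let D_m ⊆ [0,1]^ℕ be the comb inverse limit associated to the finite family (a_n,b_n)_{n=1}^m. Then X_∞ equals the closure in [0,1]^ℕ of the union ⋃_{m≥1} D_m. -/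
/-
If the teeth `{a i} × [a i, b i]` get short, then away from the diagonal only finitely many of
them are long enough to matter, so the union of the diagonal with all teeth is closed; `combSet`
is cut out of `[0,1]^ℕ` by this closed relation between consecutive coordinates. Conversely, the
sequence stopped at time `N` uses only the finitely many teeth met before `N`, and the stopped
sequences converge to the original one.
-/

open Filter

open Set Topology

def combStep (I : Set ℕ) (a b : ℕ → ℝ) : Set (ℝ × ℝ) :=
  {p | p.1 = p.2 ∨ ∃ i ∈ I, p.2 ∈ Icc (a i) (b i) ∧ p.1 = a i}

variable {I J : Set ℕ} {a b : ℕ → ℝ}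

theorem mem_combSet {x : ℕ → ℝ} :
    x ∈ combSet I a b ↔ (∀ k, x k ∈ Icc 0 1) ∧ ∀ k, (x k, x (k + 1)) ∈ combStep I a b :=
  Iff.rfl

theorem combStep_mono (h : I ⊆ J) : combStep I a b ⊆ combStep J a b := by
  rintro p (hp | ⟨i, hi, hp⟩)
  exacts [Or.inl hp, Or.inr ⟨i, h hi, hp⟩]

theorem combSet_mono (h : I ⊆ J) : combSet I a b ⊆ combSet J a b :=
  fun _ hx => mem_combSet.2 ⟨hx.1, fun k => combStep_mono h ((mem_combSet.1 hx).2 k)⟩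

theorem isClosed_combStep (hlim : Tendsto (fun n => b n - a n) atTop (𝓝 0)) :
    IsClosed (combStep I a b) := by
  refine isClosed_of_closure_subset fun p hp => ?_
  by_cases hdiag : p.1 = p.2
  · exact Or.inl hdiag
  have hgap : 0 < |p.2 - p.1| := abs_pos.2 (sub_ne_zero.2 (Ne.symm hdiag))
  set δ := |p.2 - p.1| / 2
  have hδ : 0 < δ := half_pos hgap
  set F := {i | i ∈ I ∧ δ ≤ b i - a i}
  have hF : F.Finite := by
    have : ∀ᶠ n in cofinite, b n - a n < δ := by
      rw [Nat.cofinite_eq_atTop]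
      exact hlim.eventually (gt_mem_nhds hδ)
    exact (eventually_cofinite.1 this).subset fun i hi => not_lt.2 hi.2
  have hcover : combStep I a b ⊆
      {q : ℝ × ℝ | |q.2 - q.1| ≤ δ} ∪ ⋃ i ∈ F, {a i} ×ˢ Icc (a i) (b i) := by
    rintro q (hq | ⟨i, hi, hq2, hq1⟩)
    · left
      simp [hq, hδ.le]
    · by_cases hlong : δ ≤ b i - a i
      · exact Or.inr (mem_biUnion ⟨hi, hlong⟩ ⟨hq1, hq2⟩)
      · left
        rw [mem_ofPred_eq, hq1, abs_of_nonneg (sub_nonneg.2 hq2.1)]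
        linarith [hq2.2]
  have hclosed : IsClosed
      ({q : ℝ × ℝ | |q.2 - q.1| ≤ δ} ∪ ⋃ i ∈ F, {a i} ×ˢ Icc (a i) (b i)) :=
    (isClosed_le (by fun_prop) continuous_const).union
      (hF.isClosed_biUnion fun i _ => isClosed_singleton.prod isClosed_Icc)
  rcases closure_minimal hcover hclosed hp with hnear | hteeth
  · have : |p.2 - p.1| ≤ |p.2 - p.1| / 2 := hnear
    linarith
  · obtain ⟨i, ⟨hi, -⟩, hp1, hp2⟩ := mem_iUnion₂.1 hteeth
    exact Or.inr ⟨i, hi, hp2, hp1⟩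

theorem isClosed_combSet (I : Set ℕ) (hlim : Tendsto (fun n => b n - a n) atTop (𝓝 0)) :
    IsClosed (combSet I a b) := by
  have : combSet I a b = (⋂ k, (fun x : ℕ → ℝ => x k) ⁻¹' Icc 0 1) ∩
      ⋂ k, (fun x : ℕ → ℝ => (x k, x (k + 1))) ⁻¹' combStep I a b := by
    ext x
    simp only [mem_combSet, mem_inter_iff, mem_iInter, mem_preimage]
  rw [this]
  exact (isClosed_iInter fun k => isClosed_Icc.preimage (continuous_apply k)).inter
    (isClosed_iInter fun k => (isClosed_combStep hlim).preimage (by fun_prop))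

theorem eventually_mem_combStep_inter_Iic {p : ℝ × ℝ} (hp : p ∈ combStep I a b) :
    ∀ᶠ m in atTop, p ∈ combStep (I ∩ Iic m) a b := by
  rcases hp with hp | ⟨i, hi, hp⟩
  · exact .of_forall fun _ => Or.inl hp
  · filter_upwards [eventually_ge_atTop i] with m hm
    exact Or.inr ⟨i, ⟨hi, hm⟩, hp⟩

theorem eventually_comp_min_mem_combSet {x : ℕ → ℝ} (hx : x ∈ combSet I a b) (N : ℕ) :
    ∀ᶠ m in atTop, (fun k => x (min k N)) ∈ combSet (I ∩ Iic m) a b := by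
  have hsteps : ∀ᶠ m in atTop, ∀ k ∈ Finset.range N,
      (x k, x (k + 1)) ∈ combStep (I ∩ Iic m) a b :=
    (eventually_all_finset _).2 fun k _ => eventually_mem_combStep_inter_Iic (hx.2 k)
  filter_upwards [hsteps] with m hm
  refine mem_combSet.2 ⟨fun k => hx.1 _, fun k => ?_⟩
  rcases lt_or_ge k N with hk | hk
  · simpa only [min_eq_left hk.le, min_eq_left (Nat.succ_le_of_lt hk)] using
      hm k (Finset.mem_range.2 hk)
  · left
    simp [min_eq_right hk, min_eq_right (hk.trans (Nat.le_succ k))]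

theorem tendsto_comp_min_nhds {X : Type*} [TopologicalSpace X] (x : ℕ → X) :
    Tendsto (fun N k => x (min k N)) atTop (𝓝 x) :=
  tendsto_pi_nhds.2 fun k => tendsto_const_nhds.congr' <|
    (eventually_ge_atTop k).mono fun N hN => by simp [min_eq_left hN]

theorem stmt10_general (a b : ℕ → ℝ)
    (hlim : Tendsto (fun n => b n - a n) atTop (nhds 0)) :
    combSet {n | 1 ≤ n} a b =
      closure (⋃ m ∈ {m : ℕ | 1 ≤ m}, combSet {n | 1 ≤ n ∧ n ≤ m} a b) := by
  refine subset_antisymm (fun x hx => ?_) (closure_minimal ?_ (isClosed_combSet _ hlim))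
  · refine mem_closure_of_tendsto (tendsto_comp_min_nhds x) (.of_forall fun N => ?_)
    obtain ⟨m, hxm, hm⟩ :=
      ((eventually_comp_min_mem_combSet hx N).and (eventually_ge_atTop 1)).exists
    exact mem_biUnion (t := fun m => combSet {n | 1 ≤ n ∧ n ≤ m} a b) hm hxm
  · exact iUnion₂_subset fun m _ => combSet_mono fun n hn => hn.1

/-- The full comb inverse limit is the closure of the union of the finite ones. -/
theorem stmt10 (a b : ℕ → ℝ)
    (hab : ∀ n, 1 ≤ n → 0 < a n ∧ a n < b n ∧ b n ≤ 1)
    (hdist : ∀ m n, 1 ≤ m → 1 ≤ n → m ≠ n → a m ≠ a n)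
    (hlim : Tendsto (fun n => b n - a n) atTop (nhds 0))
    (hdense : Set.Icc (0 : ℝ) 1 ⊆ closure {t : ℝ | ∃ n, 1 ≤ n ∧ a n = t}) :
    combSet {n | 1 ≤ n} a b =
      closure (⋃ m ∈ {m : ℕ | 1 ≤ m}, combSet {n | 1 ≤ n ∧ n ≤ m} a b) :=
  stmt10_general a b hlim
end

section
/- Let A be a countable set and X ⊆ A^ℕ a nonempty shift-invariant set of sequences. For finite words α = α_1⋯α_n and β = β_1⋯β_m over A, write S_α = S_{α_1}⋯S_{α_n} (with S_∅ = 1) and β⌢y for the sequence obtained by prepending β to y ∈ A^ℕ. Then S_β S_α* S_α S_β* = P_{C(α,β)}, where C(α,β) = { x ∈ X : there exists y ∈ A^ℕ with x = β⌢y and α⌢y ∈ X }. In particular S_α* S_α = P_{F_α} with F_α = {y ∈ X : α⌢y ∈ X}, S_β S_β* = P_{Z_β} with Z_β = {β⌢y : β⌢y ∈ X}, and S_α S_β = 0 whenever the concatenated word αβ is not an initial segment of any element of X. -/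
open ContinuousLinearMap
open scoped Classical

/-- Prepend a letter to a sequence. -/
def consSeq {A : Type*} (a : A) (x : ℕ → A) : ℕ → A :=
  fun n => Nat.casesOn n a x

/-- Prepend a finite word to a sequence. -/
def consWord {A : Type*} (w : List A) (x : ℕ → A) : ℕ → A :=
  w.foldr consSeq x

/-- `S_α = S_{α₁} ⋯ S_{αₙ}`, with `S_∅ = 1`. -/
def opWord {H : Type*} [NormedAddCommGroup H] [NormedSpace ℂ H] {A : Type*}
    (S : A → H →L[ℂ] H) (w : List A) : H →L[ℂ] H :=
  w.foldr (fun a T => (S a).comp T) (ContinuousLinearMap.id ℂ H)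

/-!
Every `S_a`, hence every `S_w`, maps `e_x` to `e_{w⌢x}` or to `0`, and `y ↦ w⌢y` is injective,
so `S_w†` maps `e_{w⌢y}` back to `e_y` and kills the basis vectors outside the range of `S_w`.
Shift invariance makes `y ∈ X` whenever `w⌢y ∈ X`, so on `e_x` the operator
`S_β (S_α† S_α) S_β†` acts as `1` exactly when `x = β⌢y` with `α⌢y ∈ X`, and as `0` otherwise.
Taking `α = []` gives `S_β S_β†`, and `S_α S_β` maps `e_x` to `e_{αβ⌢x}` or to `0`.
-/

open scoped lp ComplexConjugate

section Words

variable {A : Type*}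

theorem consWord_apply_add_length (w : List A) (y : ℕ → A) (n : ℕ) :
    consWord w y (n + w.length) = y n := by
  induction w with
  | nil => rfl
  | cons a t ih => exact ih

theorem consWord_injective (w : List A) : Function.Injective (consWord w) := fun y y' h =>
  funext fun n => by rw [← consWord_apply_add_length w y, h, consWord_apply_add_length]

theorem consWord_append (w w' : List A) (y : ℕ → A) :
    consWord (w ++ w') y = consWord w (consWord w' y) :=
  List.foldr_append

theorem mem_of_consWord_mem {X : Set (ℕ → A)} (hshift : ∀ x ∈ X, (fun n => x (n + 1)) ∈ X)
    {w : List A} {y : ℕ → A} (h : consWord w y ∈ X) : y ∈ X := by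
  induction w with
  | nil => exact h
  | cons a t ih => exact ih (hshift _ h)

end Words

namespace lp

variable {𝕜 : Type*} [RCLike 𝕜] {ι κ : Type*} [DecidableEq ι] [DecidableEq κ]

theorem ext_single_one {F : Type*} [AddCommMonoid F] [Module 𝕜 F] [TopologicalSpace F]
    [T2Space F] {T U : ℓ²(ι, 𝕜) →L[𝕜] F}
    (h : ∀ i, T (lp.single 2 i 1) = U (lp.single 2 i 1)) : T = U :=
  lp.ext_continuousLinearMap ENNReal.ofNat_ne_top fun i => ContinuousLinearMap.ext_ring (h i)

theorem adjoint_apply_single_one (T : ℓ²(ι, 𝕜) →L[𝕜] ℓ²(κ, 𝕜)) (i : ι) (j : κ) :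
    adjoint T (lp.single 2 j 1) i = conj (T (lp.single 2 i 1) j) := by
  have h := adjoint_inner_right T (lp.single 2 i 1) (lp.single 2 j 1)
  rw [lp.inner_single_left, lp.inner_single_right] at h
  simpa [RCLike.inner_apply] using h

end lp

section Pushforward

variable {𝕜 : Type*} [RCLike 𝕜] {α : Type*} {X : Set α}

def IsPushforward (φ : α → α) (T : ℓ²(X, 𝕜) →L[𝕜] ℓ²(X, 𝕜)) : Prop :=
  ∀ x : X, T (lp.single 2 x 1) = if h : φ x ∈ X then lp.single 2 ⟨φ x, h⟩ 1 else 0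

theorem isPushforward_id : IsPushforward id (ContinuousLinearMap.id 𝕜 ℓ²(X, 𝕜)) :=
  fun x => by rw [id, dif_pos x.2]; rfl

namespace IsPushforward

variable {φ ψ : α → α} {T U : ℓ²(X, 𝕜) →L[𝕜] ℓ²(X, 𝕜)}

theorem comp (hT : IsPushforward φ T) (hU : IsPushforward ψ U) (hφ : ∀ y, φ y ∈ X → y ∈ X) :
    IsPushforward (φ ∘ ψ) (T.comp U) := by
  intro x
  rw [Function.comp_apply, comp_apply, hU x]
  by_cases hx : ψ x ∈ X
  · rw [dif_pos hx, hT]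
  · rw [dif_neg hx, map_zero, dif_neg fun h => hx (hφ _ h)]

theorem adjoint_apply_single_image (hT : IsPushforward φ T) (hφ : φ.Injective) (x : X)
    (h : φ x ∈ X) : adjoint T (lp.single 2 ⟨φ x, h⟩ 1) = lp.single 2 x 1 := by
  apply lp.ext; funext z
  rw [lp.adjoint_apply_single_one, hT z]
  by_cases hz : z = x
  · subst hz
    simp [h]
  · have hφz : ∀ h', (⟨φ x, h⟩ : X) ≠ ⟨φ z, h'⟩ := fun _ he =>
      hz (Subtype.ext (hφ (congrArg Subtype.val he)).symm)
    rw [lp.single_apply_ne 2 x 1 hz]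
    split_ifs with h'
    · rw [lp.single_apply_ne 2 _ 1 (hφz h'), map_zero]
    · simp

theorem adjoint_apply_single_of_notMem_range (hT : IsPushforward φ T) (x : X)
    (h : ∀ y : X, φ y ≠ x) : adjoint T (lp.single 2 x 1) = 0 := by
  apply lp.ext; funext z
  rw [lp.adjoint_apply_single_one, hT z]
  split_ifs with h'
  · rw [lp.single_apply_ne 2 _ 1 fun he => h z (congrArg Subtype.val he).symm, map_zero]
    rfl
  · simp

theorem adjoint_comp_apply_single (hT : IsPushforward φ T) (hφ : φ.Injective) (x : X) :
    ((adjoint T).comp T) (lp.single 2 x 1) = if φ x ∈ X then lp.single 2 x 1 else 0 := by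
  rw [comp_apply, hT x]
  split_ifs with hx
  · exact hT.adjoint_apply_single_image hφ x hx
  · exact map_zero _

theorem comp_comp_adjoint_apply_single (hT : IsPushforward φ T) (hφ : φ.Injective)
    {M : ℓ²(X, 𝕜) →L[𝕜] ℓ²(X, 𝕜)} {Q : Set X}
    (hM : ∀ y, M (lp.single 2 y 1) = if y ∈ Q then lp.single 2 y 1 else 0) (x : X) :
    (T.comp (M.comp (adjoint T))) (lp.single 2 x 1) =
      if ∃ y ∈ Q, φ y = x then lp.single 2 x 1 else 0 := by
  rw [comp_apply, comp_apply]
  by_cases hx : ∃ y : X, φ y = x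
  · obtain ⟨y, hyx⟩ := hx
    have hy : φ y ∈ X := hyx ▸ x.2
    obtain rfl : x = ⟨φ y, hy⟩ := Subtype.ext hyx.symm
    rw [hT.adjoint_apply_single_image hφ y hy, hM y]
    by_cases hyQ : y ∈ Q
    · rw [if_pos hyQ, hT y, dif_pos hy, if_pos ⟨y, hyQ, rfl⟩]
    · rw [if_neg hyQ, map_zero, if_neg]
      rintro ⟨y', hy'Q, hy'⟩
      exact hyQ (Subtype.ext (hφ hy') ▸ hy'Q)
  · rw [hT.adjoint_apply_single_of_notMem_range x (not_exists.mp hx), map_zero, map_zero, if_neg]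
    rintro ⟨y, -, hy⟩
    exact hx ⟨y, hy⟩

end IsPushforward

end Pushforward

section ShiftSpace

variable {A : Type*} {X : Set (ℕ → A)} {S : A → ℓ²(X, ℂ) →L[ℂ] ℓ²(X, ℂ)}

theorem isPushforward_opWord (hshift : ∀ x ∈ X, (fun n => x (n + 1)) ∈ X)
    (hS : ∀ a, IsPushforward (consSeq a) (S a)) (w : List A) : IsPushforward (consWord w) (opWord S w) := by
  induction w with
  | nil => exact isPushforward_id
  | cons a w ih => exact (hS a).comp ih fun y h => hshift _ h

theorem opWord_comp_comp_adjoint_apply_single (hshift : ∀ x ∈ X, (fun n => x (n + 1)) ∈ X)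
    (hS : ∀ a, IsPushforward (consSeq a) (S a)) (α β : List A) (x : X) :
    ((opWord S β).comp (((adjoint (opWord S α)).comp (opWord S α)).comp
      (adjoint (opWord S β)))) (lp.single 2 x 1) =
      if ∃ y, (x : ℕ → A) = consWord β y ∧ consWord α y ∈ X then lp.single 2 x 1 else 0 := by
  have hα := (isPushforward_opWord hshift hS α).adjoint_comp_apply_single (consWord_injective α)
  rw [(isPushforward_opWord hshift hS β).comp_comp_adjoint_apply_single
    (consWord_injective β) hα]
  congr 1
  refine propext ⟨fun ⟨y, hy, hyx⟩ => ⟨y, hyx.symm, hy⟩, fun ⟨y, hxy, hy⟩ => ?_⟩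
  exact ⟨⟨y, mem_of_consWord_mem hshift (hxy ▸ x.2)⟩, hy, hxy.symm⟩

end ShiftSpace

theorem stmt15_general {A : Type*} (X : Set (ℕ → A))
    (hshift : ∀ x ∈ X, (fun n => x (n + 1)) ∈ X)
    (S : A → lp (fun _ : ↥X => ℂ) 2 →L[ℂ] lp (fun _ : ↥X => ℂ) 2)
    (P : Set ↥X → (lp (fun _ : ↥X => ℂ) 2 →L[ℂ] lp (fun _ : ↥X => ℂ) 2))
    (hS : ∀ (a : A) (x : ↥X), S a (lp.single 2 x 1) =
      if h : consSeq a ↑x ∈ X then lp.single 2 (⟨consSeq a ↑x, h⟩ : ↥X) 1 else 0)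
    (hP : ∀ (Q : Set ↥X) (x : ↥X),
      P Q (lp.single 2 x 1) = if x ∈ Q then lp.single 2 x 1 else 0) :
    (∀ α β : List A,
      (opWord S β).comp (((adjoint (opWord S α)).comp (opWord S α)).comp
          (adjoint (opWord S β))) =
        P {x : ↥X | ∃ y : ℕ → A, (x : ℕ → A) = consWord β y ∧ consWord α y ∈ X}) ∧
    (∀ α : List A,
      (adjoint (opWord S α)).comp (opWord S α) = P {y : ↥X | consWord α ↑y ∈ X}) ∧
    (∀ β : List A,
      (opWord S β).comp (adjoint (opWord S β)) =
        P {x : ↥X | ∃ y : ℕ → A, (x : ℕ → A) = consWord β y}) ∧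
    (∀ α β : List A, (¬ ∃ y : ℕ → A, consWord (α ++ β) y ∈ X) →
      (opWord S α).comp (opWord S β) = 0) := by
  have hSw := isPushforward_opWord hshift hS
  have eq_P : ∀ {Q T}, (∀ x, T (lp.single 2 x 1) = if x ∈ Q then lp.single 2 x 1 else 0) →
      T = P Q := fun hT => lp.ext_single_one fun x => by rw [hT, hP]
  have hC := fun α β => eq_P (opWord_comp_comp_adjoint_apply_single hshift hS α β)
  refine ⟨hC, fun α => eq_P ((hSw α).adjoint_comp_apply_single (consWord_injective α)),
    fun β => ?_, fun α β h => ?_⟩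
  · have h := hC [] β
    rw [show opWord S [] = .id ℂ _ from rfl, adjoint_id, id_comp, id_comp] at h
    rw [h]
    congr 1
    ext x
    exact ⟨fun ⟨y, hxy, _⟩ => ⟨y, hxy⟩,
      fun ⟨y, hxy⟩ => ⟨y, hxy, mem_of_consWord_mem hshift (hxy ▸ x.2)⟩⟩
  · refine lp.ext_single_one fun x => ?_
    rw [((hSw α).comp (hSw β) fun y => mem_of_consWord_mem hshift) x, zero_apply, dif_neg]
    exact fun hx => h ⟨x, by rwa [consWord_append]⟩

theorem stmt15 {A : Type*} [Countable A] (X : Set (ℕ → A)) (hne : X.Nonempty)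
    (hshift : ∀ x ∈ X, (fun n => x (n + 1)) ∈ X)
    (S : A → lp (fun _ : ↥X => ℂ) 2 →L[ℂ] lp (fun _ : ↥X => ℂ) 2)
    (P : Set ↥X → (lp (fun _ : ↥X => ℂ) 2 →L[ℂ] lp (fun _ : ↥X => ℂ) 2))
    (hS : ∀ (a : A) (x : ↥X), S a (lp.single 2 x 1) =
      if h : consSeq a ↑x ∈ X then lp.single 2 (⟨consSeq a ↑x, h⟩ : ↥X) 1 else 0)
    (hP : ∀ (Q : Set ↥X) (x : ↥X),
      P Q (lp.single 2 x 1) = if x ∈ Q then lp.single 2 x 1 else 0) :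
    (∀ α β : List A,
      (opWord S β).comp (((adjoint (opWord S α)).comp (opWord S α)).comp
          (adjoint (opWord S β))) =
        P {x : ↥X | ∃ y : ℕ → A, (x : ℕ → A) = consWord β y ∧ consWord α y ∈ X}) ∧
    (∀ α : List A,
      (adjoint (opWord S α)).comp (opWord S α) = P {y : ↥X | consWord α ↑y ∈ X}) ∧
    (∀ β : List A,
      (opWord S β).comp (adjoint (opWord S β)) =
        P {x : ↥X | ∃ y : ℕ → A, (x : ℕ → A) = consWord β y}) ∧
    (∀ α β : List A, (¬ ∃ y : ℕ → A, consWord (α ++ β) y ∈ X) →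
      (opWord S α).comp (opWord S β) = 0) :=
  stmt15_general X hshift S P hS hP
end
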